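/- arXiv:math/0611770 — 5 statements merged into one kernel-verified Lean document; each statement's English description precedes it below -/
import Mathlib

section
/- G'(0) = 1, i.e. the right derivative of G at 0 equals g(0) = 1. -/
open Set

/-- The function `G(η) := inf_{0 ≤ θ ≤ 1} (ψ(1-θ) + θη)`. -/
noncomputable def G (ψ : ℝ → ℝ) (η : ℝ) : ℝ :=
  sInf ((fun θ : ℝ => ψ (1 - θ) + θ * η) '' Icc 0 1)

/-- The right derivative of `G` at `0` equals `g(0) = 1`. -/
theorem stmt5 (ψ ψ' : ℝ → ℝ)
    (hconv : ConvexOn ℝ (Icc 0 1) ψ)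
    (hmono : MonotoneOn ψ (Icc 0 1))
    (hnonneg : ∀ θ ∈ Icc (0:ℝ) 1, 0 ≤ ψ θ)
    (h0 : ψ 0 = 0)
    (hd : ∀ t ∈ Icc (0:ℝ) 1, HasDerivAt ψ (ψ' t) t)
    (hcont : ContinuousOn ψ' (Icc 0 1))
    (h0' : ψ' 0 = 0)
    (hsm : StrictMonoOn ψ' (Icc 0 1))
    (g : ℝ → ℝ)
    (hg : ∀ η ∈ Ico 0 (ψ' 1), ψ' (1 - g η) = η ∧ g η ∈ Icc (0:ℝ) 1) :
    HasDerivWithinAt (G ψ) 1 (Ici 0) 0 ∧ g 0 = 1 := by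
  have h1mem : (1:ℝ) ∈ Icc (0:ℝ) 1 := ⟨zero_le_one, le_refl 1⟩
  have h0mem : (0:ℝ) ∈ Icc (0:ℝ) 1 := ⟨le_refl 0, zero_le_one⟩
  have hψ'1 : 0 < ψ' 1 := by
    have := hsm h0mem h1mem zero_lt_one
    rwa [h0'] at this
  have hg0 : g 0 = 1 := by
    obtain ⟨he, hmem⟩ := hg 0 ⟨le_refl 0, hψ'1⟩
    have h1g : 1 - g 0 ∈ Icc (0:ℝ) 1 := ⟨by linarith [hmem.2], by linarith [hmem.1]⟩
    have := hsm.injOn h1g h0mem (by rw [he, h0'])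
    linarith
  refine ⟨?_, hg0⟩
  -- continuity of ψ on Icc 0 1
  have hψc : ContinuousOn ψ (Icc 0 1) :=
    fun x hx => ((hd x hx).continuousAt).continuousWithinAt
  -- supporting line at e
  have hsupp : ∀ e, 0 < e → e ≤ 1 → ∀ y, e ≤ y → y ≤ 1 →
      ψ' e * (y - e) ≤ ψ y - ψ e := by
    intro e he0 he1 y hey hy1
    rcases eq_or_lt_of_le hey with rfl | hlt
    · simp
    · obtain ⟨c, hc, hc'⟩ := exists_hasDerivAt_eq_slope ψ ψ' hlt
        (hψc.mono (Icc_subset_Icc (by linarith) hy1))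
        (fun x hx => hd x ⟨by linarith [hx.1], by linarith [hx.2]⟩)
      have hce : ψ' e ≤ ψ' c :=
        (hsm ⟨he0.le, he1⟩ ⟨by linarith [hc.1], by linarith [hc.2]⟩ hc.1).le
      have hye : (0:ℝ) < y - e := by linarith
      have : ψ' c * (y - e) = ψ y - ψ e := by
        rw [hc']; field_simp
      nlinarith [mul_le_mul_of_nonneg_right hce hye.le]
  -- basic facts about G
  have hne : ∀ η : ℝ, ((fun θ : ℝ => ψ (1 - θ) + θ * η) '' Icc 0 1).Nonempty :=
    fun η => ⟨_, ⟨1, h1mem, rfl⟩⟩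
  have hbdd : ∀ η : ℝ, 0 ≤ η → ∀ z ∈ (fun θ : ℝ => ψ (1 - θ) + θ * η) '' Icc 0 1, (0:ℝ) ≤ z := by
    rintro η hη z ⟨θ, hθ, rfl⟩
    have h1 : 0 ≤ ψ (1 - θ) := hnonneg _ ⟨by linarith [hθ.2], by linarith [hθ.1]⟩
    show (0:ℝ) ≤ ψ (1 - θ) + θ * η
    nlinarith [hθ.1, hθ.2]
  have hG0 : G ψ 0 = 0 := by
    apply le_antisymm
    · exact csInf_le ⟨0, fun z hz => hbdd 0 le_rfl z hz⟩ ⟨1, h1mem, by simp [h0]⟩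
    · exact le_csInf (hne 0) (hbdd 0 le_rfl)
  have hGle : ∀ η : ℝ, 0 ≤ η → G ψ η ≤ η := by
    intro η hη
    refine csInf_le ⟨0, fun z hz => hbdd η hη z hz⟩ ⟨1, h1mem, by simp [h0]⟩
  have hGge : ∀ e, 0 < e → e ≤ 1 → ∀ η, 0 ≤ η → η ≤ ψ' e → (1 - e) * η ≤ G ψ η := by
    intro e he0 he1 η hη0 hηe
    refine le_csInf (hne η) ?_
    rintro z ⟨θ, hθ, rfl⟩
    by_cases hcase : θ ≤ 1 - e
    · have h1 : ψ' e * ((1 - θ) - e) ≤ ψ (1 - θ) - ψ e :=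
        hsupp e he0 he1 (1 - θ) (by linarith) (by linarith [hθ.1])
      have h2 : 0 ≤ ψ e := hnonneg e ⟨he0.le, he1⟩
      have h3 : η * ((1 - θ) - e) ≤ ψ' e * ((1 - θ) - e) :=
        mul_le_mul_of_nonneg_right hηe (by linarith)
      show (1 - e) * η ≤ ψ (1 - θ) + θ * η
      nlinarith
    · push_neg at hcase
      have h1 : 0 ≤ ψ (1 - θ) := hnonneg _ ⟨by linarith [hθ.2], by linarith [hθ.1]⟩
      show (1 - e) * η ≤ ψ (1 - θ) + θ * η
      nlinarith
  -- the derivative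
  rw [hasDerivWithinAt_iff_tendsto_slope]
  have hset : Ici (0:ℝ) \ {0} = Ioi 0 := Ici_sdiff_left
  rw [hset]
  rw [Metric.tendsto_nhdsWithin_nhds]
  intro ε hε
  set e : ℝ := min (ε / 2) 1 with he_def
  have he0 : 0 < e := lt_min (by linarith) zero_lt_one
  have he1 : e ≤ 1 := min_le_right _ _
  have hδ : 0 < ψ' e := by
    have := hsm h0mem ⟨he0.le, he1⟩ he0
    rwa [h0'] at this
  refine ⟨ψ' e, hδ, ?_⟩
  intro x hx hxd
  have hx0 : (0:ℝ) < x := hx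
  have hxδ : x < ψ' e := by
    rw [Real.dist_eq, sub_zero, abs_of_pos hx0] at hxd
    exact hxd
  have hup : G ψ x ≤ x := hGle x hx0.le
  have hlo : (1 - e) * x ≤ G ψ x := hGge e he0 he1 x hx0.le hxδ.le
  have hslope : slope (G ψ) 0 x = G ψ x / x := by
    rw [slope_def_field, hG0]
    ring
  rw [Real.dist_eq, hslope]
  have h1 : G ψ x / x ≤ 1 := by
    rw [div_le_one hx0]; exact hup
  have h2 : 1 - e ≤ G ψ x / x := by
    rw [le_div_iff₀ hx0]; linarith
  have heε : e ≤ ε / 2 := min_le_left _ _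
  rw [abs_sub_lt_iff]
  constructor <;> linarith
end

section
/- For c > 0 and 0 ≤ θ < 1, ψ_c(θ) admits the power series expansion ψ_c(θ) = Σ_{k≥2} (θ^k/k) · (R_c + R_c² + ... + R_c^{k-1})/(k-1), where R_c = 1/(c+1). -/
/-! `ψ_c(θ) = c⁻¹ (F(θ) - (1 + c) F(θ R_c))` with `F(x) = (1 - x) log (1 - x) + x`: the linear
terms cancel because `(1 + c) θ R_c = θ`, and `F(x) = ∑ₘ x^(m+2) / ((m+1)(m+2))` is the integral
of the series of `-log (1 - x)`. Comparing coefficients leaves `(1 - R_c^(m+1)) / c`, which is the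
geometric sum `R_c + ⋯ + R_c^(m+1)` because `1 - R_c = c R_c`. -/

open Set

/-- Talagrand's function `ψ_c`. -/
noncomputable def psiC (c : ℝ) (θ : ℝ) : ℝ :=
  c⁻¹ * ((1 - θ) * Real.log (1 - θ) - (1 - θ + c) * Real.log ((1 - θ + c) / (1 + c)))

theorem Real.hasSum_pow_div_succ_mul_add_two {x : ℝ} (hx : |x| < 1) :
    HasSum (fun m : ℕ => x ^ (m + 2) / ((m + 1) * (m + 2)))
      ((1 - x) * Real.log (1 - x) + x) := by
  have hlog := Real.hasSum_pow_div_log_of_abs_lt_one hx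
  have htail := (hasSum_nat_add_iff' (f := fun n : ℕ => x ^ (n + 1) / ((n : ℝ) + 1)) 1).2 hlog
  simp only [Finset.range_one, Finset.sum_singleton, Nat.cast_zero, zero_add, pow_one,
    div_one] at htail
  rw [show (1 - x) * Real.log (1 - x) + x = x * -Real.log (1 - x) - (-Real.log (1 - x) - x) by
    ring]
  refine ((hlog.mul_left x).sub htail).congr_fun fun m => ?_
  push_cast
  field_simp
  ring

theorem sum_range_one_div_add_one_pow_succ {c : ℝ} (hc : c ≠ 0) (hc₁ : c + 1 ≠ 0) (n : ℕ) :
    ∑ j ∈ Finset.range n, (1 / (c + 1)) ^ (j + 1) = (1 - (1 / (c + 1)) ^ n) / c := by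
  induction n with
  | zero => simp
  | succ n ih =>
    rw [Finset.sum_range_succ, ih, div_pow, div_pow, one_pow, one_pow]
    field_simp
    ring

theorem psiC_eq_sub_mul (c θ : ℝ) (hc₁ : c + 1 ≠ 0) :
    psiC c θ = c⁻¹ * (((1 - θ) * Real.log (1 - θ) + θ) -
      (1 + c) * ((1 - θ * (1 / (c + 1))) * Real.log (1 - θ * (1 / (c + 1))) +
        θ * (1 / (c + 1)))) := by
  have hc₁' : 1 + c ≠ 0 := by rwa [add_comm]
  have harg : 1 - θ * (1 / (c + 1)) = (1 - θ + c) / (1 + c) := by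
    field_simp
    ring
  rw [psiC, harg]
  field_simp
  ring

theorem coeff_sub_mul_pow_div {c : ℝ} (hc : c ≠ 0) (hc₁ : c + 1 ≠ 0) (θ : ℝ) (m : ℕ) :
    c⁻¹ * (θ ^ (m + 2) / ((m + 1) * (m + 2)) -
      (1 + c) * ((θ * (1 / (c + 1))) ^ (m + 2) / ((m + 1) * (m + 2)))) =
    θ ^ (m + 2) / (m + 2) *
      ((∑ j ∈ Finset.range (m + 1), (1 / (c + 1)) ^ (j + 1)) / (m + 1)) := by
  rw [sum_range_one_div_add_one_pow_succ hc hc₁, mul_pow, div_pow, div_pow, one_pow, one_pow]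
  field_simp
  ring

/-- For `c > 0` and `0 ≤ θ < 1`,
`ψ_c(θ) = Σ_{k ≥ 2} (θ^k/k)·(R_c + R_c² + ⋯ + R_c^{k-1})/(k-1)` with `R_c = 1/(c+1)`.
(The series over `k ≥ 2` is reindexed by `k = m + 2`.) -/
theorem stmt8 (c : ℝ) (hc : 0 < c) (θ : ℝ) (hθ : θ ∈ Ico (0:ℝ) 1) :
    psiC c θ = ∑' m : ℕ,
      θ ^ (m + 2) / (m + 2) *
        ((∑ j ∈ Finset.range (m + 1), (1 / (c + 1)) ^ (j + 1)) / (m + 1)) := by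
  obtain ⟨hθ₀, hθ₁⟩ := hθ
  have hc₁ : c + 1 ≠ 0 := by positivity
  have hθR : |θ * (1 / (c + 1))| < 1 := by
    rw [abs_of_nonneg (by positivity), mul_one_div, div_lt_one (by positivity)]
    linarith
  have hθ' : |θ| < 1 := by rwa [abs_of_nonneg hθ₀]
  have hsum := ((Real.hasSum_pow_div_succ_mul_add_two hθ').sub
    ((Real.hasSum_pow_div_succ_mul_add_two hθR).mul_left (1 + c))).mul_left c⁻¹
  simp only [coeff_sub_mul_pow_div hc.ne' hc₁] at hsum
  rw [hsum.tsum_eq, psiC_eq_sub_mul c θ hc₁]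
end

section
/- For c > 0 and θ ∈ [0,1], ψ_c(θ) ≥ θ²/(2+2c). -/
/-!
Put `u = 1 - θ`. The difference
`F u = u log u - (u + c) log ((u + c) / (1 + c)) - c (1 - u)² / (2 + 2c)` vanishes at `u = 1`,
and by `log x ≤ x - 1` its derivative `log u - log ((u + c) / (1 + c)) + c (1 - u) / (1 + c)` is at
most `-c (1 - u)² / ((1 + c) (u + c)) ≤ 0`, so `F ≥ 0` on `[0, 1]`.
-/

open Set

open Real

lemma mul_sub_sq_div_le_mul_log_sub_mul_log {c u : ℝ} (hc : 0 < c) (hu₀ : 0 ≤ u) (hu₁ : u ≤ 1) :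
    c * (1 - u) ^ 2 / (2 + 2 * c) ≤ u * log u - (u + c) * log ((u + c) / (1 + c)) := by
  set F : ℝ → ℝ := fun x ↦
    x * log x - (x + c) * log ((x + c) / (1 + c)) - c * (1 - x) ^ 2 / (2 + 2 * c) with hF
  have hF' : ∀ x ∈ Ioo (0 : ℝ) 1,
      HasDerivAt F (log x - log ((x + c) / (1 + c)) + c * (1 - x) / (1 + c)) x := by
    intro x hx
    have hxc : x + c ≠ 0 := by have := hx.1; positivity
    have hshift := ((hasDerivAt_id x).add_const c).div_const (1 + c)
    refine (((hasDerivAt_mul_log hx.1.ne').sub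
      (((hasDerivAt_id x).add_const c).mul (hshift.log (by positivity)))).sub
      ((((hasDerivAt_id x).const_sub 1).pow 2).const_mul c |>.div_const (2 + 2 * c))).congr_deriv ?_
    simp only [id]
    field_simp
    ring
  have hF'_nonpos : ∀ x ∈ Ioo (0 : ℝ) 1,
      log x - log ((x + c) / (1 + c)) + c * (1 - x) / (1 + c) ≤ 0 := by
    intro x ⟨hx₀, hx₁⟩
    have hy : 0 < (x + c) / (1 + c) := by positivity
    have hlog := log_le_sub_one_of_pos (div_pos hx₀ hy)
    rw [log_div hx₀.ne' hy.ne'] at hlog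
    have hbound : x / ((x + c) / (1 + c)) - 1 + c * (1 - x) / (1 + c) =
        -(c * (1 - x) ^ 2 / ((1 + c) * (x + c))) := by
      field_simp
      ring
    have : 0 ≤ c * (1 - x) ^ 2 / ((1 + c) * (x + c)) := by positivity
    linarith
  have hcont : ContinuousOn F (Icc 0 1) := by
    have hlog : ContinuousOn (fun x ↦ log ((x + c) / (1 + c))) (Icc 0 1) :=
      ContinuousOn.log (by fun_prop) fun x hx ↦ by have := hx.1; positivity
    exact (continuous_mul_log.continuousOn.sub (by fun_prop)).sub (by fun_prop)
  have hanti : AntitoneOn F (Icc 0 1) := by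
    refine antitoneOn_of_deriv_nonpos (convex_Icc 0 1) hcont ?_ ?_ <;> rw [interior_Icc]
    · exact fun x hx ↦ (hF' x hx).differentiableAt.differentiableWithinAt
    · exact fun x hx ↦ (hF' x hx).deriv ▸ hF'_nonpos x hx
  have hF1 := hanti ⟨hu₀, hu₁⟩ ⟨zero_le_one, le_rfl⟩ hu₁
  simp [hF, div_self (by positivity : (1 : ℝ) + c ≠ 0)] at hF1
  linarith

/-- For `c > 0` and `θ ∈ [0,1]`, `ψ_c(θ) ≥ θ²/(2+2c)`. -/
theorem stmt9 (c : ℝ) (hc : 0 < c) (θ : ℝ) (hθ : θ ∈ Icc (0:ℝ) 1) :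
    θ ^ 2 / (2 + 2 * c) ≤ psiC c θ := by
  have h := mul_sub_sq_div_le_mul_log_sub_mul_log hc (sub_nonneg.2 hθ.2) (sub_le_self 1 hθ.1)
  rw [sub_sub_cancel, mul_div_assoc] at h
  rw [psiC, le_inv_mul_iff₀ hc]
  exact h
end

section
/- ψ_c is the largest solution of the differential inequality: if ψ:[0,1]→ℝ is twice differentiable with ψ(0)=ψ'(0)=0 and ψ''(1-θ) ≤ 1/(θ²+cθ) for all 0<θ<1, then ψ(t) ≤ ψ_c(t) for all t ∈ [0,1]. -/
open Set

/-!
`ψ_c` solves the differential inequality with equality, `ψ_c(0) = ψ_c'(0) = 0`. Comparing second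
derivatives gives `ψ' ≤ ψ_c'` on `[0,1)`, and comparing first derivatives then gives `ψ ≤ ψ_c`
on `[0,1]`; each comparison is the monotonicity of a difference with nonnegative derivative.
-/

lemma le_of_hasDerivAt_le_of_le {f g f' g' : ℝ → ℝ} {a b : ℝ}
    (hf : ContinuousOn f (Icc a b)) (hg : ContinuousOn g (Icc a b))
    (hf' : ∀ x ∈ Ioo a b, HasDerivAt f (f' x) x) (hg' : ∀ x ∈ Ioo a b, HasDerivAt g (g' x) x)
    (hle : ∀ x ∈ Ioo a b, f' x ≤ g' x) (ha : f a ≤ g a) :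
    ∀ x ∈ Icc a b, f x ≤ g x := by
  intro x hx
  have hmono : MonotoneOn (g - f) (Icc a b) := by
    refine monotoneOn_of_hasDerivWithinAt_nonneg (convex_Icc a b) (hg.sub hf) (f' := g' - f')
      (fun y hy ↦ ?_) (fun y hy ↦ ?_) <;> rw [interior_Icc] at hy
    · exact ((hg' y hy).sub (hf' y hy)).hasDerivWithinAt
    · exact sub_nonneg.2 (hle y hy)
  have := hmono (left_mem_Icc.2 (hx.1.trans hx.2)) hx hx.1
  simp only [Pi.sub_apply] at this
  linarith

noncomputable def psiCDeriv (c : ℝ) (t : ℝ) : ℝ :=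
  c⁻¹ * (Real.log (1 - t + c) - Real.log (1 + c) - Real.log (1 - t))

section psiC

variable {c : ℝ} (hc : 0 < c)
include hc

lemma hasDerivAt_psiC {t : ℝ} (ht : t < 1) : HasDerivAt (psiC c) (psiCDeriv c t) t := by
  have h1 : 0 < 1 - t := by linarith
  have h2 : 0 < 1 - t + c := by linarith
  have hA : HasDerivAt (fun θ : ℝ ↦ 1 - θ) (-1) t := by
    simpa using (hasDerivAt_id t).const_sub 1
  have hB : HasDerivAt (fun θ : ℝ ↦ 1 - θ + c) (-1) t := hA.add_const c
  have hψ := ((hA.mul (hA.log h1.ne')).sub (hB.mul ((hB.log h2.ne').sub_const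
    (Real.log (1 + c))))).const_mul c⁻¹
  have heq : psiC c =ᶠ[nhds t] fun θ ↦ c⁻¹ * ((1 - θ) * Real.log (1 - θ) -
      (1 - θ + c) * (Real.log (1 - θ + c) - Real.log (1 + c))) := by
    filter_upwards [Iio_mem_nhds (show t < 1 + c by linarith)] with θ hθ
    rw [psiC, Real.log_div (by linarith [mem_Iio.1 hθ]) (by linarith)]
  refine (hψ.congr_of_eventuallyEq heq).congr_deriv ?_
  rw [psiCDeriv]
  field_simp
  ring

lemma hasDerivAt_psiCDeriv {t : ℝ} (ht : t < 1) :
    HasDerivAt (psiCDeriv c) (1 / ((1 - t) ^ 2 + c * (1 - t))) t := by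
  have h1 : 0 < 1 - t := by linarith
  have h2 : 0 < 1 - t + c := by linarith
  have hA : HasDerivAt (fun θ : ℝ ↦ 1 - θ) (-1) t := by
    simpa using (hasDerivAt_id t).const_sub 1
  have hB : HasDerivAt (fun θ : ℝ ↦ 1 - θ + c) (-1) t := hA.add_const c
  refine ((((hB.log h2.ne').sub_const (Real.log (1 + c))).sub
    (hA.log h1.ne')).const_mul c⁻¹).congr_deriv ?_
  field_simp
  ring

lemma continuousOn_psiC : ContinuousOn (psiC c) (Iic 1) := by
  refine continuousOn_const.mul (ContinuousOn.sub ?_ ?_)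
  · exact (Real.continuous_mul_log.comp (continuous_const.sub continuous_id)).continuousOn
  · refine ContinuousOn.mul (by fun_prop) (ContinuousOn.log (by fun_prop) fun t ht ↦ ?_)
    exact (div_pos (by linarith [mem_Iic.1 ht]) (by linarith)).ne'

lemma psiC_zero : psiC c 0 = 0 := by
  simp [psiC, div_self (show 1 + c ≠ 0 by linarith)]

end psiC

lemma psiCDeriv_zero (c : ℝ) : psiCDeriv c 0 = 0 := by
  simp [psiCDeriv]

theorem stmt10_general (c : ℝ) (hc : 0 < c) (ψ ψ' ψ'' : ℝ → ℝ)
    (hd1 : ∀ t ∈ Icc (0:ℝ) 1, HasDerivAt ψ (ψ' t) t)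
    (hd2 : ∀ t ∈ Icc (0:ℝ) 1, HasDerivAt ψ' (ψ'' t) t)
    (h0 : ψ 0 = 0) (h0' : ψ' 0 = 0)
    (hineq : ∀ θ ∈ Ioo (0:ℝ) 1, ψ'' (1 - θ) ≤ 1 / (θ ^ 2 + c * θ)) :
    ∀ t ∈ Icc (0:ℝ) 1, ψ t ≤ psiC c t := by
  have hderiv_le : ∀ x ∈ Ico (0:ℝ) 1, ψ' x ≤ psiCDeriv c x := by
    intro x hx
    refine le_of_hasDerivAt_le_of_le
      (fun t ht ↦ (hd2 t ⟨ht.1, ht.2.trans hx.2.le⟩).continuousAt.continuousWithinAt)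
      (fun t ht ↦ (hasDerivAt_psiCDeriv hc (ht.2.trans_lt hx.2)).continuousAt.continuousWithinAt)
      (fun t ht ↦ hd2 t ⟨ht.1.le, ht.2.le.trans hx.2.le⟩)
      (fun t ht ↦ hasDerivAt_psiCDeriv hc (ht.2.trans hx.2))
      (fun t ht ↦ ?_) (by rw [h0', psiCDeriv_zero]) x (right_mem_Icc.2 hx.1)
    simpa using hineq (1 - t) ⟨by linarith [ht.2, hx.2], by linarith [ht.1]⟩
  exact le_of_hasDerivAt_le_of_le
    (fun t ht ↦ (hd1 t ht).continuousAt.continuousWithinAt)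
    ((continuousOn_psiC hc).mono fun t ht ↦ ht.2)
    (fun t ht ↦ hd1 t (Ioo_subset_Icc_self ht)) (fun t ht ↦ hasDerivAt_psiC hc ht.2)
    (fun t ht ↦ hderiv_le t (Ioo_subset_Ico_self ht)) (by rw [h0, psiC_zero hc])

/-- `ψ_c` is the largest solution of the differential inequality: if `ψ : [0,1] → ℝ` is twice
continuously differentiable with `ψ(0) = ψ'(0) = 0` and `ψ''(1-θ) ≤ 1/(θ² + cθ)` for all
`0 < θ < 1`, then `ψ(t) ≤ ψ_c(t)` for all `t ∈ [0,1]`. -/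
theorem stmt10 (c : ℝ) (hc : 0 < c) (ψ ψ' ψ'' : ℝ → ℝ)
    (hd1 : ∀ t ∈ Icc (0:ℝ) 1, HasDerivAt ψ (ψ' t) t)
    (hd2 : ∀ t ∈ Icc (0:ℝ) 1, HasDerivAt ψ' (ψ'' t) t)
    (hcont : ContinuousOn ψ'' (Icc 0 1))
    (h0 : ψ 0 = 0) (h0' : ψ' 0 = 0)
    (hineq : ∀ θ ∈ Ioo (0:ℝ) 1, ψ'' (1 - θ) ≤ 1 / (θ ^ 2 + c * θ)) :
    ∀ t ∈ Icc (0:ℝ) 1, ψ t ≤ psiC c t :=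
  stmt10_general c hc ψ ψ' ψ'' hd1 hd2 h0 h0' hineq
end

section
/- Concavity Lemma: under the stated hypotheses on ψ and ξ, the function r ↦ exp(G(ξ(r))) is concave on [0, r₀]. -/
/-!
For every `η` the infimum defining `G ψ η` is attained at `θ = T η`, where `1 - T η` solves
`ψ' (1 - T η) = η` after clamping `η` to `[0, ψ' 1]`; by the envelope argument `G' = T`.
Hence `(exp (G ∘ ξ))' = Q (ξ r) * V r` with `Q η = exp (c η + G η) * T η ≥ 0` and
`V = exp (-c ξ) * ξ'`. The bound `ξ'' ≤ c ξ'^2` makes `V` antitone, and the bound on `ψ''`,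
through `T' = -1 / ψ'' (1 - T)`, makes `Q` antitone on `[0, ∞)`. Since `ξ` moves in the
direction given by the sign of `V`, the product `Q (ξ r) * V r` is antitone, which is
concavity of `exp (G ∘ ξ)`.
-/

open Set

open Real Filter Topology Asymptotics

theorem StrictMonoOn.exists_continuous_inverse_clamp {f : ℝ → ℝ} {a b : ℝ} (hab : a ≤ b)
    (hf : ContinuousOn f (Icc a b)) (hmono : StrictMonoOn f (Icc a b)) :
    ∃ g : ℝ → ℝ, Continuous g ∧ ∀ y, g y ∈ Icc a b ∧ f (g y) = max (f a) (min (f b) y) := by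
  have hfab : f a ≤ f b :=
    hmono.monotoneOn (left_mem_Icc.2 hab) (right_mem_Icc.2 hab) hab
  have hmaps : MapsTo f (Icc a b) (Icc (f a) (f b)) := fun x hx =>
    ⟨hmono.monotoneOn (left_mem_Icc.2 hab) hx hx.1,
      hmono.monotoneOn hx (right_mem_Icc.2 hab) hx.2⟩
  have hbij : BijOn f (Icc a b) (Icc (f a) (f b)) :=
    ⟨hmaps, hmono.injOn, intermediate_value_Icc hab hf⟩
  let e : Icc a b ≃ₜ Icc (f a) (f b) :=
    Continuous.homeoOfEquivCompactToT2 (f := hbij.equiv f) (hf.mapsToRestrict hmaps)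
  refine ⟨fun y => e.symm (projIcc (f a) (f b) hfab y), by fun_prop, fun y => ⟨Subtype.prop _, ?_⟩⟩
  exact (congrArg Subtype.val (e.apply_symm_apply _)).trans (coe_projIcc _ _ _ _)

theorem StrictMonoOn.mul_sub_nonneg_of_eq_clamp {f : ℝ → ℝ} {a b t s y : ℝ}
    (hf : StrictMonoOn f (Icc a b)) (ht : t ∈ Icc a b) (hs : s ∈ Icc a b)
    (hft : f t = max (f a) (min (f b) y)) : 0 ≤ (f t - y) * (s - t) := by
  have ha : a ∈ Icc a b := left_mem_Icc.2 (ht.1.trans ht.2)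
  have hb : b ∈ Icc a b := right_mem_Icc.2 (ht.1.trans ht.2)
  rcases lt_trichotomy t s with hts | rfl | hst
  · have hlt : f t < f b := (hf ht hs hts).trans_le (hf.monotoneOn hs hb hs.2)
    have hmin : min (f b) y ≤ f t := hft ▸ le_max_right _ _
    have hy : y ≤ f t := (min_le_iff.1 hmin).resolve_left hlt.not_ge
    exact mul_nonneg (sub_nonneg.2 hy) (sub_nonneg.2 hts.le)
  · simp
  · have hlt : f a < f t := (hf.monotoneOn ha hs hs.1).trans_lt (hf hs ht hst)
    have hmax : f t ≤ max (f a) y := hft ▸ max_le_max le_rfl (min_le_right _ _)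
    have hy : f t ≤ y := (le_max_iff.1 hmax).resolve_left hlt.not_ge
    exact mul_nonneg_of_nonpos_of_nonpos (sub_nonpos.2 hy) (sub_nonpos.2 hst.le)

theorem ConvexOn.add_mul_sub_le_of_hasDerivAt {f : ℝ → ℝ} {S : Set ℝ} {x y f' : ℝ}
    (hfc : ConvexOn ℝ S f) (hx : x ∈ S) (hy : y ∈ S) (hf : HasDerivAt f f' x) :
    f x + f' * (y - x) ≤ f y := by
  rcases lt_trichotomy x y with hxy | rfl | hyx
  · have := hfc.le_slope_of_hasDerivAt hx hy hxy hf
    rw [slope_def_field, le_div_iff₀ (sub_pos.2 hxy)] at this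
    linarith
  · simp
  · have := hfc.slope_le_of_hasDerivAt hy hx hyx hf
    rw [slope_def_field, div_le_iff₀ (sub_pos.2 hyx)] at this
    linarith

theorem isMinOn_of_deriv_eq_clamp {ψ ψ' : ℝ → ℝ} (hconv : ConvexOn ℝ (Icc 0 1) ψ)
    (hd1 : ∀ t ∈ Icc (0:ℝ) 1, HasDerivAt ψ (ψ' t) t) (hsm : StrictMonoOn ψ' (Icc 0 1))
    {t η : ℝ} (ht : t ∈ Icc 0 1) (hclamp : ψ' t = max (ψ' 0) (min (ψ' 1) η)) :
    IsMinOn (fun θ => ψ (1 - θ) + θ * η) (Icc 0 1) (1 - t) := by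
  intro θ hθ
  have hs : 1 - θ ∈ Icc (0:ℝ) 1 := ⟨by linarith [hθ.2], by linarith [hθ.1]⟩
  have htangent := hconv.add_mul_sub_le_of_hasDerivAt ht hs (hd1 t ht)
  have hsign := hsm.mul_sub_nonneg_of_eq_clamp ht hs hclamp
  show ψ (1 - (1 - t)) + (1 - t) * η ≤ ψ (1 - θ) + θ * η
  rw [sub_sub_cancel]
  nlinarith

theorem hasDerivAt_sInf_image_of_isMinOn {φ T : ℝ → ℝ} {K : Set ℝ} {η : ℝ}
    (hTK : ∀ y, T y ∈ K) (hmin : ∀ y, IsMinOn (fun θ => φ θ + θ * y) K (T y))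
    (hT : ContinuousAt T η) :
    HasDerivAt (fun y => sInf ((fun θ => φ θ + θ * y) '' K)) (T η) η := by
  have hinf : ∀ y, sInf ((fun θ => φ θ + θ * y) '' K) = φ (T y) + T y * y := fun y =>
    IsLeast.csInf_eq ⟨⟨T y, hTK y, rfl⟩, by rintro _ ⟨θ, hθ, rfl⟩; exact hmin y hθ⟩
  simp only [hinf, hasDerivAt_iff_isLittleO, smul_eq_mul]
  -- the error term lies between `(T y - T η) * (y - η)` and `0`
  have hbound : (fun y => φ (T y) + T y * y - (φ (T η) + T η * η) - (y - η) * T η)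
      =O[𝓝 η] fun y => (T y - T η) * (y - η) := by
    refine IsBigO.of_bound' (Eventually.of_forall fun y => ?_)
    have hup : φ (T y) + T y * y ≤ φ (T η) + T η * y := hmin y (hTK η)
    have hlo : φ (T η) + T η * η ≤ φ (T y) + T y * η := hmin η (hTK y)
    rw [Real.norm_eq_abs, Real.norm_eq_abs, abs_le]
    constructor <;> nlinarith [neg_abs_le ((T y - T η) * (y - η)),
      abs_nonneg ((T y - T η) * (y - η))]
  have hsmall : (fun y => T y - T η) =o[𝓝 η] fun _ => (1 : ℝ) :=
    (isLittleO_one_iff ℝ).2 (by simpa using hT.sub_const (T η))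
  simpa using hbound.trans_isLittleO (hsmall.mul_isBigO (isBigO_refl (fun y => y - η) _))

theorem exists_continuous_minimizer {ψ ψ' ψ'' : ℝ → ℝ} (hconv : ConvexOn ℝ (Icc 0 1) ψ)
    (hd1 : ∀ t ∈ Icc (0:ℝ) 1, HasDerivAt ψ (ψ' t) t)
    (hd2 : ∀ t ∈ Icc (0:ℝ) 1, HasDerivAt ψ' (ψ'' t) t)
    (hpos : ∀ θ ∈ Ioo (0:ℝ) 1, 0 < ψ'' θ) (hsm : StrictMonoOn ψ' (Icc 0 1)) (h0' : ψ' 0 = 0) :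
    ∃ T : ℝ → ℝ, Continuous T ∧ (∀ η, T η ∈ Icc 0 1) ∧
      (∀ η, IsMinOn (fun θ => ψ (1 - θ) + θ * η) (Icc 0 1) (T η)) ∧
      (∀ η, ψ' 1 ≤ η → T η = 0) ∧
      ∀ η ∈ Ioo 0 (ψ' 1), T η ∈ Ioo 0 1 ∧ HasDerivAt T (-(ψ'' (1 - T η))⁻¹) η := by
  have h01 : (0:ℝ) ∈ Icc (0:ℝ) 1 := left_mem_Icc.2 zero_le_one
  have h11 : (1:ℝ) ∈ Icc (0:ℝ) 1 := right_mem_Icc.2 zero_le_one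
  obtain ⟨g, hgc, hg⟩ := hsm.exists_continuous_inverse_clamp zero_le_one
    fun t ht => (hd2 t ht).continuousAt.continuousWithinAt
  refine ⟨fun η => 1 - g η, continuous_const.sub hgc, fun η => ?_,
    fun η => isMinOn_of_deriv_eq_clamp hconv hd1 hsm (hg η).1 (hg η).2, fun η hη => ?_,
    fun η hη => ?_⟩
  · exact ⟨sub_nonneg.2 (hg η).1.2, sub_le_self _ (hg η).1.1⟩
  · have : ψ' (g η) = ψ' 1 := by
      rw [(hg η).2, min_eq_left hη, max_eq_right (hsm.monotoneOn h01 h11 zero_le_one)]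
    simp [hsm.injOn (hg η).1 h11 this]
  · have hinv : ∀ y ∈ Ioo 0 (ψ' 1), ψ' (g y) = y := fun y hy => by
      rw [(hg y).2, h0', min_eq_right hy.2.le, max_eq_right hy.1.le]
    have hgη : g η ∈ Ioo 0 1 := by
      refine ⟨lt_of_le_of_ne (hg η).1.1 fun h => ?_, lt_of_le_of_ne (hg η).1.2 fun h => ?_⟩
      · exact hη.1.ne (h0' ▸ h ▸ hinv η hη)
      · exact hη.2.ne' (h ▸ hinv η hη)
    have hderiv : HasDerivAt g (ψ'' (g η))⁻¹ η :=
      (hd2 _ (Ioo_subset_Icc_self hgη)).of_local_left_inverse hgc.continuousAt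
        (hpos _ hgη).ne' (eventually_of_mem (isOpen_Ioo.mem_nhds hη) hinv)
    refine ⟨⟨sub_pos.2 hgη.2, sub_lt_self _ hgη.1⟩, ?_⟩
    simpa using hderiv.const_sub 1

theorem antitoneOn_exp_mul_of_hasDerivAt {F T k : ℝ → ℝ} {a M c : ℝ} (haM : a ≤ M)
    (hF : ∀ η, HasDerivAt F (T η) η) (hTc : Continuous T)
    (hT' : ∀ η ∈ Ioo a M, HasDerivAt T (-(k η)⁻¹) η)
    (hk : ∀ η ∈ Ioo a M, (c + T η) * T η ≤ (k η)⁻¹) (hT0 : ∀ η, M ≤ η → T η = 0) :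
    AntitoneOn (fun η => exp (c * η + F η) * T η) (Ici a) := by
  have hFc : Continuous F := continuous_iff_continuousAt.2 fun η => (hF η).continuousAt
  have hQ' : ∀ η ∈ Ioo a M, HasDerivAt (fun η => exp (c * η + F η) * T η)
      (exp (c * η + F η) * ((c + T η) * T η - (k η)⁻¹)) η := fun η hη =>
    ((((hasDerivAt_id' η).const_mul c).fun_add (hF η)).exp.mul (hT' η hη)).congr_deriv (by ring)
  have hIcc : AntitoneOn (fun η => exp (c * η + F η) * T η) (Icc a M) := by
    refine antitoneOn_of_hasDerivWithinAt_nonpos (convex_Icc a M) (by fun_prop)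
      (f' := fun η => exp (c * η + F η) * ((c + T η) * T η - (k η)⁻¹)) ?_ ?_ <;>
      rw [interior_Icc] <;> intro η hη
    · exact (hQ' η hη).hasDerivWithinAt
    · exact mul_nonpos_of_nonneg_of_nonpos (exp_pos _).le (sub_nonpos.2 (hk η hη))
  have hIci : AntitoneOn (fun η => exp (c * η + F η) * T η) (Ici M) := fun x hx y hy _ => by
    simp [hT0 x hx, hT0 y hy]
  simpa [Icc_union_Ici_eq_Ici haM] using hIcc.union_right hIci (isGreatest_Icc haM) isLeast_Ici

theorem antitoneOn_exp_neg_mul_mul_deriv {ξ ξ' ξ'' : ℝ → ℝ} {a b c : ℝ}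
    (hξ : ∀ r ∈ Ioo a b, HasDerivAt ξ (ξ' r) r) (hξ' : ∀ r ∈ Ioo a b, HasDerivAt ξ' (ξ'' r) r)
    (hc : ∀ r ∈ Ioo a b, ξ'' r ≤ c * ξ' r ^ 2) :
    AntitoneOn (fun r => exp (-c * ξ r) * ξ' r) (Ioo a b) := by
  have hV' : ∀ r ∈ Ioo a b, HasDerivAt (fun r => exp (-c * ξ r) * ξ' r)
      (exp (-c * ξ r) * (ξ'' r - c * ξ' r ^ 2)) r := fun r hr =>
    (((hξ r hr).const_mul (-c)).exp.mul (hξ' r hr)).congr_deriv (by ring)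
  refine antitoneOn_of_hasDerivWithinAt_nonpos (convex_Ioo a b)
    (fun r hr => (hV' r hr).continuousAt.continuousWithinAt)
    (f' := fun r => exp (-c * ξ r) * (ξ'' r - c * ξ' r ^ 2)) ?_ ?_ <;>
    rw [interior_Ioo] <;> intro r hr
  · exact (hV' r hr).hasDerivWithinAt
  · exact mul_nonpos_of_nonneg_of_nonpos (exp_pos _).le (sub_nonpos.2 (hc r hr))

theorem antitoneOn_comp_mul_of_sign {Q ξ ξ' V : ℝ → ℝ} {I J : Set ℝ} (hI : I.OrdConnected)
    (hξ : ∀ r ∈ I, HasDerivAt ξ (ξ' r) r) (hξJ : MapsTo ξ I J) (hQ : AntitoneOn Q J)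
    (hQ0 : ∀ x ∈ J, 0 ≤ Q x) (hV : AntitoneOn V I) (hsign : ∀ r ∈ I, 0 ≤ V r ↔ 0 ≤ ξ' r) :
    AntitoneOn (fun r => Q (ξ r) * V r) I := by
  intro a ha b hb hab
  have hsub : Icc a b ⊆ I := hI.out ha hb
  have hcont : ContinuousOn ξ (Icc a b) := fun x hx =>
    (hξ x (hsub hx)).continuousAt.continuousWithinAt
  have hderiv : ∀ x ∈ interior (Icc a b),
      HasDerivWithinAt ξ (ξ' x) (interior (Icc a b)) x := fun x hx =>
    (hξ x (hsub (interior_subset hx))).hasDerivWithinAt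
  have hQa := hQ0 _ (hξJ ha)
  have hQb := hQ0 _ (hξJ hb)
  have hVab := hV ha hb hab
  rcases le_or_gt 0 (V b) with hVb | hVb
  · -- `V ≥ 0` on `[a, b]`, so `ξ` increases there
    have hmono : MonotoneOn ξ (Icc a b) :=
      monotoneOn_of_hasDerivWithinAt_nonneg (convex_Icc a b) hcont hderiv fun x hx =>
        have hx := interior_subset hx
        (hsign x (hsub hx)).1 (hVb.trans (hV (hsub hx) hb hx.2))
    have hQab := hQ (hξJ ha) (hξJ hb) (hmono (left_mem_Icc.2 hab) (right_mem_Icc.2 hab) hab)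
    exact mul_le_mul hQab hVab hVb hQa
  rcases le_or_gt 0 (V a) with hVa | hVa
  · exact (mul_nonpos_of_nonneg_of_nonpos hQb hVb.le).trans (mul_nonneg hQa hVa)
  · -- `V < 0` on `[a, b]`, so `ξ` decreases there
    have hanti : AntitoneOn ξ (Icc a b) :=
      antitoneOn_of_hasDerivWithinAt_nonpos (convex_Icc a b) hcont hderiv fun x hx => by
        have hx := interior_subset hx
        exact le_of_not_ge fun h => ((hsign x (hsub hx)).2 h).not_gt
          ((hV ha (hsub hx) hx.1).trans_lt hVa)
    have hQab := hQ (hξJ hb) (hξJ ha) (hanti (left_mem_Icc.2 hab) (right_mem_Icc.2 hab) hab)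
    nlinarith

theorem concaveOn_of_hasDerivAt_of_antitoneOn {D : Set ℝ} (hD : Convex ℝ D) {f f' : ℝ → ℝ}
    (hf : ContinuousOn f D) (hf' : ∀ x ∈ interior D, HasDerivAt f (f' x) x)
    (hanti : AntitoneOn f' (interior D)) : ConcaveOn ℝ D f :=
  hanti.congr (fun x hx => (hf' x hx).deriv.symm) |>.concaveOn_of_deriv hD hf
    fun x hx => (hf' x hx).differentiableAt.differentiableWithinAt

theorem mul_le_inv_of_le_one_div {k θ c : ℝ} (hk : 0 < k) (h : k ≤ 1 / (θ ^ 2 + θ * c)) :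
    (c + θ) * θ ≤ k⁻¹ := by
  rcases le_or_gt (θ ^ 2 + θ * c) 0 with hx | hx
  · nlinarith [inv_pos.2 hk]
  · rw [le_one_div hk hx, one_div] at h
    linarith

theorem exists_hasDerivAt_G_and_antitoneOn_exp_mul {ψ ψ' ψ'' : ℝ → ℝ} {c : ℝ}
    (hconv : ConvexOn ℝ (Icc 0 1) ψ) (hd1 : ∀ t ∈ Icc (0:ℝ) 1, HasDerivAt ψ (ψ' t) t)
    (hd2 : ∀ t ∈ Icc (0:ℝ) 1, HasDerivAt ψ' (ψ'' t) t) (h0' : ψ' 0 = 0)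
    (hpos : ∀ θ ∈ Ioo (0:ℝ) 1, 0 < ψ'' θ)
    (hψ'' : ∀ θ ∈ Ioo (0:ℝ) 1, ψ'' (1 - θ) ≤ 1 / (θ ^ 2 + θ * c)) :
    ∃ T : ℝ → ℝ, (∀ η, HasDerivAt (G ψ) (T η) η) ∧ (∀ η, T η ∈ Icc 0 1) ∧
      AntitoneOn (fun η => exp (c * η + G ψ η) * T η) (Ici 0) := by
  have hsm : StrictMonoOn ψ' (Icc 0 1) :=
    strictMonoOn_of_hasDerivWithinAt_pos (convex_Icc 0 1)
      (fun t ht => (hd2 t ht).continuousAt.continuousWithinAt)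
      (fun t ht => (hd2 t (interior_subset ht)).hasDerivWithinAt)
      (fun t ht => hpos t (by rwa [interior_Icc] at ht))
  have hM : 0 < ψ' 1 :=
    h0' ▸ hsm (left_mem_Icc.2 zero_le_one) (right_mem_Icc.2 zero_le_one) one_pos
  obtain ⟨T, hTc, hTK, hmin, hT0, hT'⟩ := exists_continuous_minimizer hconv hd1 hd2 hpos hsm h0'
  have hG : ∀ η, HasDerivAt (G ψ) (T η) η := fun η =>
    hasDerivAt_sInf_image_of_isMinOn hTK hmin hTc.continuousAt
  refine ⟨T, hG, hTK, antitoneOn_exp_mul_of_hasDerivAt hM.le hG hTc (fun η hη => (hT' η hη).2)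
    (fun η hη => ?_) hT0⟩
  have hθ := (hT' η hη).1
  exact mul_le_inv_of_le_one_div (hpos _ ⟨sub_pos.2 hθ.2, sub_lt_self _ hθ.1⟩) (hψ'' _ hθ)

theorem stmt11_general (ψ ψ' ψ'' : ℝ → ℝ)
    (hconv : ConvexOn ℝ (Icc 0 1) ψ)
    (hd1 : ∀ t ∈ Icc (0:ℝ) 1, HasDerivAt ψ (ψ' t) t)
    (hd2 : ∀ t ∈ Icc (0:ℝ) 1, HasDerivAt ψ' (ψ'' t) t)
    (h0' : ψ' 0 = 0)
    (hpos : ∀ θ ∈ Ioo (0:ℝ) 1, 0 < ψ'' θ)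
    (r₀ : ℝ)
    (ξ ξ' ξ'' : ℝ → ℝ)
    (hξcont : ContinuousOn ξ (Icc 0 r₀))
    (hξnn : ∀ r ∈ Icc 0 r₀, 0 ≤ ξ r)
    (hξd1 : ∀ r ∈ Ioo 0 r₀, HasDerivAt ξ (ξ' r) r)
    (hξd2 : ∀ r ∈ Ioo 0 r₀, HasDerivAt ξ' (ξ'' r) r)
    (c : ℝ)
    (hcξ : ∀ r ∈ Ioo 0 r₀, ξ'' r ≤ c * (ξ' r) ^ 2)
    (hψ'' : ∀ θ ∈ Ioo (0:ℝ) 1, ψ'' (1 - θ) ≤ 1 / (θ ^ 2 + θ * c)) :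
    ConcaveOn ℝ (Icc 0 r₀) (fun r => Real.exp (G ψ (ξ r))) := by
  obtain ⟨T, hG, hTK, hQ⟩ :=
    exists_hasDerivAt_G_and_antitoneOn_exp_mul hconv hd1 hd2 h0' hpos hψ''
  have hV := antitoneOn_exp_neg_mul_mul_deriv hξd1 hξd2 hcξ
  have hF' : ∀ r ∈ Ioo 0 r₀, HasDerivAt (fun r => exp (G ψ (ξ r)))
      (exp (c * ξ r + G ψ (ξ r)) * T (ξ r) * (exp (-c * ξ r) * ξ' r)) r := fun r hr =>
    ((hG (ξ r)).comp r (hξd1 r hr)).exp.congr_deriv (by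
      rw [Function.comp_apply, neg_mul, exp_neg, exp_add]
      field_simp)
  have hanti : AntitoneOn (fun r => exp (c * ξ r + G ψ (ξ r)) * T (ξ r) * (exp (-c * ξ r) * ξ' r))
      (Ioo 0 r₀) :=
    antitoneOn_comp_mul_of_sign ordConnected_Ioo hξd1 (fun r hr => hξnn r (Ioo_subset_Icc_self hr))
      hQ (fun η _ => mul_nonneg (exp_pos _).le (hTK η).1) hV
      fun r _ => mul_nonneg_iff_of_pos_left (exp_pos _)
  have hGc : Continuous (G ψ) := continuous_iff_continuousAt.2 fun η => (hG η).continuousAt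
  rw [← interior_Icc] at hF' hanti
  exact concaveOn_of_hasDerivAt_of_antitoneOn (convex_Icc 0 r₀)
    ((continuous_exp.comp hGc).comp_continuousOn hξcont) hF' hanti

/-- Concavity Lemma: suppose `ψ : [0,1] → ℝ₊` is convex increasing with
`ψ(0) = 0 = ψ'(0)` and `ψ'' > 0` on `(0,1)`; suppose `ξ : [0,r₀] → ℝ₊` is continuous,
twice differentiable on `(0,r₀)`, and `ξ'' ≤ c·(ξ')²` there for some finite constant `c`.
If `ψ''(1-θ) ≤ 1/(θ² + θc)` for `0 < θ < 1`, then `r ↦ exp(G(ξ(r)))` is concave on `[0,r₀]`. -/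
theorem stmt11 (ψ ψ' ψ'' : ℝ → ℝ)
    (hconv : ConvexOn ℝ (Icc 0 1) ψ)
    (hmono : MonotoneOn ψ (Icc 0 1))
    (hnonneg : ∀ θ ∈ Icc (0:ℝ) 1, 0 ≤ ψ θ)
    (h0 : ψ 0 = 0)
    (hd1 : ∀ t ∈ Icc (0:ℝ) 1, HasDerivAt ψ (ψ' t) t)
    (hd2 : ∀ t ∈ Icc (0:ℝ) 1, HasDerivAt ψ' (ψ'' t) t)
    (h0' : ψ' 0 = 0)
    (hpos : ∀ θ ∈ Ioo (0:ℝ) 1, 0 < ψ'' θ)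
    (r₀ : ℝ) (hr₀ : 0 < r₀)
    (ξ ξ' ξ'' : ℝ → ℝ)
    (hξcont : ContinuousOn ξ (Icc 0 r₀))
    (hξnn : ∀ r ∈ Icc 0 r₀, 0 ≤ ξ r)
    (hξd1 : ∀ r ∈ Ioo 0 r₀, HasDerivAt ξ (ξ' r) r)
    (hξd2 : ∀ r ∈ Ioo 0 r₀, HasDerivAt ξ' (ξ'' r) r)
    (c : ℝ)
    (hcξ : ∀ r ∈ Ioo 0 r₀, ξ'' r ≤ c * (ξ' r) ^ 2)
    (hψ'' : ∀ θ ∈ Ioo (0:ℝ) 1, ψ'' (1 - θ) ≤ 1 / (θ ^ 2 + θ * c)) :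
    ConcaveOn ℝ (Icc 0 r₀) (fun r => Real.exp (G ψ (ξ r))) :=
  stmt11_general ψ ψ' ψ'' hconv hd1 hd2 h0' hpos r₀ ξ ξ' ξ'' hξcont hξnn hξd1 hξd2 c hcξ hψ''
end
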